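/- Let A and B be n×n complex matrices. Suppose B is strongly Drazin invertible with strongly Drazin inverse B^D, and B^D A = 0, B A B^π = 0 (where B^π = I − BB^D), and every eigenvalue of A and every eigenvalue of B lies in {0, 1}. Then the 2n×2n block matrix M with blocks (A, I) in the first block row and (B, 0) in the second block row is Hirano invertible. -/

import Mathlib

/-!
An eigenvector `(x, y)` of `M = [[A, I], [B, 0]]` for `μ` satisfies `B x = μ² x - μ A x`. The
idempotent `B B^D` commutes with `B` and annihilates `A` from the left, while `B A` vanishes on
the kernel of `B B^D`; following `x` through `B B^D x`, `B x` or `x` itself shows that `μ²` is an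
eigenvalue of `B` or `μ` one of `A`. Either way `μ³ = μ`, so `M - M³` is nilpotent.

In any ring, if `a - a³` is nilpotent then `a²` is idempotent modulo nilpotents. Lifting this
idempotent to `e` inside the commutative subring generated by `a`, the element
`a e (1 + e (a² - e))⁻¹` is a Hirano inverse of `a`.
-/

/-- An element of a ring is *Hirano invertible* if there exists `x` with
`a * x = x * a`, `x = x * a * x`, and `a ^ 2 - a * x` nilpotent. -/
def IsHirano {R : Type*} [Ring R] (a : R) : Prop :=
  ∃ x : R, a * x = x * a ∧ x = x * a * x ∧ IsNilpotent (a ^ 2 - a * x)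

/-- `Y` is the *strongly Drazin inverse* of `B`: `B * Y = Y * B`, `Y = Y * B * Y`,
and `B - B * Y` is nilpotent. -/
def IsSDrazinInv {R : Type*} [Ring R] (b y : R) : Prop :=
  b * y = y * b ∧ y = y * b * y ∧ IsNilpotent (b - b * y)

open Polynomial

theorem IsHirano.map {R S F : Type*} [Ring R] [Ring S] [FunLike F R S] [RingHomClass F R S]
    (f : F) {a : R} (h : IsHirano a) : IsHirano (f a) := by
  obtain ⟨x, hcomm, hx, hnil⟩ := h
  refine ⟨f x, ?_, ?_, ?_⟩
  · rw [← map_mul, hcomm, map_mul]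
  · rw [← map_mul, ← map_mul, ← hx]
  · simpa using hnil.map f

theorem exists_isIdempotentElem_isNilpotent_sub {R : Type*} [CommRing R] {u : R}
    (h : IsNilpotent (u - u ^ 2)) : ∃ e, IsIdempotentElem e ∧ IsNilpotent (u - e) := by
  let f := Ideal.Quotient.mk (nilradical R)
  have hker : ∀ x ∈ RingHom.ker f, IsNilpotent x := fun x hx => by
    rwa [Ideal.mk_ker] at hx
  have hu : IsIdempotentElem (f u) := by
    rw [IsIdempotentElem, ← map_mul, eq_comm, Ideal.Quotient.eq, ← sq]
    exact h
  obtain ⟨e, he, hfe⟩ := exists_isIdempotentElem_eq_of_ker_isNilpotent f hker (f u) ⟨u, rfl⟩ hu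
  exact ⟨e, he, hker _ (by rw [RingHom.mem_ker, map_sub, hfe, sub_self])⟩

theorem isHirano_of_isIdempotentElem_of_isNilpotent_sq_sub {R : Type*} [CommRing R] {a e : R}
    (he : IsIdempotentElem e) (hnil : IsNilpotent (a ^ 2 - e)) : IsHirano a := by
  have hunit : IsUnit (1 + e * (a ^ 2 - e)) :=
    ((Commute.all e _).isNilpotent_mul_left hnil).isUnit_one_add
  obtain ⟨v, hv⟩ := hunit.exists_right_inv
  have he' : e * e = e := he
  -- `e a²` is a unit of the corner ring `e R`, with inverse `e v`
  have hax : a * (a * e * v) = e := by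
    linear_combination e * hv + (v - (a ^ 2 - e) * v) * he'
  refine ⟨a * e * v, by ring, ?_, ?_⟩
  · linear_combination (-(a * e * v)) * hax - a * v * he'
  · rwa [hax]

open scoped IsMulCommutative in
theorem isHirano_of_isNilpotent_sub_pow_three {R : Type*} [Ring R] {a : R}
    (h : IsNilpotent (a - a ^ 3)) : IsHirano a := by
  let a' : Algebra.adjoin ℤ {a} := ⟨a, Algebra.self_mem_adjoin_singleton ℤ a⟩
  have ha' : IsNilpotent (a' - a' ^ 3) :=
    (IsNilpotent.map_iff (f := (Algebra.adjoin ℤ {a}).val) Subtype.val_injective).mp h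
  have hsq : IsNilpotent (a' ^ 2 - (a' ^ 2) ^ 2) := by
    rw [show a' ^ 2 - (a' ^ 2) ^ 2 = a' * (a' - a' ^ 3) by ring]
    exact (Commute.all a' _).isNilpotent_mul_left ha'
  obtain ⟨e, he, hnil⟩ := exists_isIdempotentElem_isNilpotent_sub hsq
  exact (isHirano_of_isIdempotentElem_of_isNilpotent_sq_sub he hnil).map
    (Algebra.adjoin ℤ {a}).val

namespace Matrix

variable {ι K : Type*} [Fintype ι] [DecidableEq ι] [Field K]

theorem mem_spectrum_iff_exists_mulVec_eq_smul (A : Matrix ι ι K) (μ : K) :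
    μ ∈ spectrum K A ↔ ∃ v ≠ 0, A *ᵥ v = μ • v := by
  rw [spectrum.mem_iff, isUnit_iff_isUnit_det, isUnit_iff_ne_zero, not_not,
    ← exists_mulVec_eq_zero_iff]
  simp only [Algebra.algebraMap_eq_smul_one, sub_mulVec, smul_mulVec, one_mulVec, sub_eq_zero,
    eq_comm]

theorem isNilpotent_aeval_of_forall_mem_spectrum_isRoot [IsAlgClosed K] (A : Matrix ι ι K)
    (p : K[X]) (h : ∀ μ ∈ spectrum K A, p.IsRoot μ) : IsNilpotent (aeval A p) := by
  have hdvd : A.charpoly ∣ p ^ A.charpoly.roots.card := by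
    conv_lhs => rw [(IsAlgClosed.splits A.charpoly).eq_prod_roots_of_monic A.charpoly_monic]
    rw [← Multiset.prod_replicate, ← Multiset.map_const']
    refine Multiset.prod_dvd_prod_of_dvd _ _ fun μ hμ => dvd_iff_isRoot.mpr (h μ ?_)
    exact mem_spectrum_iff_isRoot_charpoly.mpr (isRoot_of_mem_roots hμ)
  obtain ⟨q, hq⟩ := hdvd
  exact ⟨_, by rw [← map_pow, hq, map_mul, aeval_self_charpoly, zero_mul]⟩

theorem exists_mulVec_eq_of_mem_spectrum_fromBlocks {A B : Matrix ι ι K} {μ : K}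
    (hμ : μ ∈ spectrum K (fromBlocks A 1 B (0 : Matrix ι ι K))) :
    ∃ x ≠ 0, B *ᵥ x = μ ^ 2 • x - μ • A *ᵥ x := by
  obtain ⟨v, hv, hmv⟩ := (mem_spectrum_iff_exists_mulVec_eq_smul _ μ).mp hμ
  obtain ⟨x, y, rfl⟩ : ∃ x y, v = Sum.elim x y := ⟨_, _, (Sum.elim_comp_inl_inr v).symm⟩
  simp only [fromBlocks_mulVec, Sum.elim_comp_inl, Sum.elim_comp_inr, one_mulVec, zero_mulVec,
    add_zero] at hmv
  have h_top : A *ᵥ x + y = μ • x := funext fun i => by simpa using congrFun hmv (.inl i)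
  have h_bot : B *ᵥ x = μ • y := funext fun i => by simpa using congrFun hmv (.inr i)
  have hy : y = μ • x - A *ᵥ x := by rw [← h_top]; abel
  refine ⟨x, fun hx => hv ?_, ?_⟩
  · simp [hy, hx]
  · rw [h_bot, hy, smul_sub, smul_smul, sq]

theorem sq_mem_spectrum_or_mem_spectrum_of_mem_spectrum_fromBlocks {A B BD : Matrix ι ι K}
    {μ : K} (hcomm : B * BD = BD * B) (h1 : BD * A = 0) (h2 : B * A * (1 - B * BD) = 0)
    (hμ : μ ∈ spectrum K (fromBlocks A 1 B (0 : Matrix ι ι K))) :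
    μ ^ 2 ∈ spectrum K B ∨ μ ∈ spectrum K A := by
  obtain ⟨x, hx, hBx⟩ := exists_mulVec_eq_of_mem_spectrum_fromBlocks hμ
  have mem_B : ∀ w ≠ 0, B *ᵥ w = μ ^ 2 • w → μ ^ 2 ∈ spectrum K B := fun w hw hBw =>
    (mem_spectrum_iff_exists_mulVec_eq_smul B _).mpr ⟨w, hw, hBw⟩
  have hEA : B * BD * A = 0 := by rw [mul_assoc, h1, mul_zero]
  have hBE : B * (B * BD) = B * BD * B := by rw [mul_assoc, hcomm, ← mul_assoc]
  set E := B * BD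
  by_cases hEx : E *ᵥ x = 0
  · have hBAx : B *ᵥ A *ᵥ x = 0 := by
      have hsplit : B * A = B * A * (1 - E) + B * A * E := by noncomm_ring
      rw [mulVec_mulVec, hsplit, add_mulVec, h2, zero_mulVec, zero_add, ← mulVec_mulVec, hEx,
        mulVec_zero]
    by_cases hBx0 : B *ᵥ x = 0
    · by_cases hμ0 : μ = 0
      · exact .inl (mem_B x hx (by simp [hBx0, hμ0]))
      · refine .inr ((mem_spectrum_iff_exists_mulVec_eq_smul A μ).mpr ⟨x, hx, ?_⟩)
        apply smul_right_injective _ hμ0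
        rw [hBx0, eq_comm, sub_eq_zero, sq, ← smul_smul] at hBx
        exact hBx.symm
    · refine .inl (mem_B _ hBx0 ?_)
      conv_lhs => rw [hBx]
      rw [mulVec_sub, mulVec_smul, mulVec_smul, hBAx, smul_zero, sub_zero]
  · refine .inl (mem_B _ hEx ?_)
    rw [mulVec_mulVec, hBE, ← mulVec_mulVec, hBx, mulVec_sub, mulVec_smul, mulVec_smul,
      mulVec_mulVec, hEA, zero_mulVec, smul_zero, sub_zero]

end Matrix

/-- If `B` is strongly Drazin invertible with strong Drazin inverse `BD`,
`BD * A = 0`, `B * A * Bπ = 0` (with `Bπ = 1 - B * BD`), and all eigenvalues of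
`A` and of `B` lie in `{0, 1}`, then the `2n × 2n` block matrix
`[[A, I], [B, 0]]` is Hirano invertible. -/
theorem hirano_block_anti_triangular {n : ℕ} (A B BD : Matrix (Fin n) (Fin n) ℂ)
    (hB : IsSDrazinInv B BD) (h1 : BD * A = 0) (h2 : B * A * (1 - B * BD) = 0)
    (hA_eig : ∀ μ ∈ spectrum ℂ A, μ = 0 ∨ μ = 1)
    (hB_eig : ∀ μ ∈ spectrum ℂ B, μ = 0 ∨ μ = 1) :
    IsHirano (Matrix.fromBlocks A 1 B (0 : Matrix (Fin n) (Fin n) ℂ)) := by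
  apply isHirano_of_isNilpotent_sub_pow_three
  have hroot : ∀ μ ∈ spectrum ℂ (Matrix.fromBlocks A 1 B (0 : Matrix (Fin n) (Fin n) ℂ)),
      ((X : ℂ[X]) - X ^ 3).IsRoot μ := by
    intro μ hμ
    have hμ' : μ = 0 ∨ μ ^ 2 = 1 := by
      rcases Matrix.sq_mem_spectrum_or_mem_spectrum_of_mem_spectrum_fromBlocks hB.1 h1 h2 hμ
        with hB' | hA'
      · exact (hB_eig _ hB').imp (pow_eq_zero_iff two_ne_zero).mp id
      · exact (hA_eig _ hA').imp id fun h => by rw [h, one_pow]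
    rcases hμ' with rfl | hsq
    · simp
    · simp only [IsRoot.def, eval_sub, eval_pow, eval_X]
      linear_combination (-μ) * hsq
  simpa using Matrix.isNilpotent_aeval_of_forall_mem_spectrum_isRoot _ _ hroot
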